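/- arXiv:2602.00657 — 3 statements merged into one kernel-verified Lean document; each statement's English description precedes it below -/
import Mathlib

section
/- Let G be a finite simple graph with a vertex cover X, let B be a set of closed neighborhoods of G, and let k be a positive integer. Suppose u, v ∈ V(G) ∖ X are false twins with N[u] ∉ B and N[v] ∉ B. Then, letting G′ = G − v and B′ = {N_{G′}[w] : w ∈ V(G′) and N_G[w] ∈ B}, there is a non-clashing teaching map of size at most k for B in G if and only if there is a non-clashing teaching map of size at most k for B′ in G′. -/
/-- The closed neighborhood `N[v]` of a vertex `v` in a graph `G`. -/
def cN {V : Type*} (G : SimpleGraph V) (v : V) : Set V :=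
  insert v {u | G.Adj v u}

/-- A vertex `w` distinguishes `N[u]` and `N[v]` if it lies in exactly one of them. -/
def Distinguishes {V : Type*} (G : SimpleGraph V) (w u v : V) : Prop :=
  Xor' (w ∈ cN G u) (w ∈ cN G v)

/-- `T` is a non-clashing teaching map for the family `B` of closed neighborhoods of `G`. -/
def IsNCTM {V : Type*} (G : SimpleGraph V) (B : Set (Set V)) (T : Set V → Set V) : Prop :=
  ∀ u v : V, cN G u ∈ B → cN G v ∈ B → cN G u ≠ cN G v →
    ∃ w ∈ T (cN G u) ∪ T (cN G v), Distinguishes G w u v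

/-- There is a non-clashing teaching map of size at most `k` for `B` in `G`. -/
def HasNCTM {V : Type*} (G : SimpleGraph V) (B : Set (Set V)) (k : ℕ) : Prop :=
  ∃ T : Set V → Set V, IsNCTM G B T ∧ ∀ S ∈ B, (T S).ncard ≤ k

/-- The family `B` restricted to the graph `G − S`:
`B' = {N_{G−S}[w] : w ∈ V(G−S), N_G[w] ∈ B}`. -/
def restrictB {V : Type*} (G : SimpleGraph V) (B : Set (Set V)) (S : Set V) :
    Set (Set ↥(Sᶜ)) :=
  {b | ∃ w : ↥(Sᶜ), cN G w.1 ∈ B ∧ b = cN (G.induce Sᶜ) w}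

/-- Reduction rule 3 is safe: let `X` be a vertex cover of `G` and `k` a positive
integer.  If `u, v ∈ V(G) ∖ X` are false twins with `N[u] ∉ B` and `N[v] ∉ B`, then `v`
can be deleted: there is an NCTM of size at most `k` for `B` in `G` iff there is one for
the restriction `B'` of `B` in `G − v`. -/
theorem stmt11 {V : Type*} [Fintype V] (G : SimpleGraph V)
    (X : Set V) (hX : ∀ u v : V, G.Adj u v → u ∈ X ∨ v ∈ X)
    (B : Set (Set V)) (hB : B ⊆ {S | ∃ v : V, S = cN G v})
    (k : ℕ) (hk : 0 < k)
    (u v : V) (huv : u ≠ v) (hu : u ∉ X) (hv : v ∉ X)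
    (htwin : G.neighborSet u = G.neighborSet v)
    (hunb : cN G u ∉ B) (hvnb : cN G v ∉ B) :
    HasNCTM G B k ↔ HasNCTM (G.induce ({v} : Set V)ᶜ) (restrictB G B {v}) k := by
  classical
  have hu' : u ∈ ({v} : Set V)ᶜ := by simp [huv]
  set G' : SimpleGraph ↥(({v} : Set V)ᶜ) := G.induce ({v} : Set V)ᶜ with hG'
  -- membership transfer
  have hmem : ∀ (a x : ↥(({v} : Set V)ᶜ)), x ∈ cN G' a ↔ (x : V) ∈ cN G (a : V) := by
    intro a x
    constructor
    · rintro (rfl | h)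
      · exact Or.inl rfl
      · exact Or.inr h
    · rintro (h | h)
      · exact Or.inl (Subtype.ext h)
      · exact Or.inr h
  -- vertices whose closed nbhd is in B avoid u and v
  have hwB : ∀ w : V, cN G w ∈ B → w ≠ u ∧ w ≠ v := by
    intro w hw
    constructor
    · rintro rfl; exact hunb hw
    · rintro rfl; exact hvnb hw
  -- for w ∉ {u,v} : v ∈ N[w] ↔ u ∈ N[w]
  have hvu : ∀ w : V, w ≠ u → w ≠ v → (v ∈ cN G w ↔ u ∈ cN G w) := by
    intro w hwu hwv
    have h1 : v ∈ cN G w ↔ G.Adj w v := by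
      constructor
      · rintro (h | h)
        · exact absurd h.symm hwv
        · exact h
      · exact Or.inr
    have h2 : u ∈ cN G w ↔ G.Adj w u := by
      constructor
      · rintro (h | h)
        · exact absurd h.symm hwu
        · exact h
      · exact Or.inr
    rw [h1, h2]
    have hns : w ∈ G.neighborSet u ↔ w ∈ G.neighborSet v := by rw [htwin]
    simp only [SimpleGraph.mem_neighborSet] at hns
    constructor
    · intro h; exact (hns.2 h.symm).symm
    · intro h; exact (hns.1 h.symm).symm
  have hvuB : ∀ w : V, cN G w ∈ B → (v ∈ cN G w ↔ u ∈ cN G w) :=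
    fun w hw => hvu w (hwB w hw).1 (hwB w hw).2
  -- N_{G'} determined by N_G
  have hphi : ∀ a : ↥(({v} : Set V)ᶜ), cN G' a = {x : ↥(({v} : Set V)ᶜ) | (x : V) ∈ cN G (a : V)} := by
    intro a; ext x; exact hmem a x
  have hphi' : ∀ (a : V) (h : a ∈ ({v} : Set V)ᶜ),
      cN G' ⟨a, h⟩ = {x : ↥(({v} : Set V)ᶜ) | (x : V) ∈ cN G a} := by
    intro a h; ext x; exact hmem ⟨a, h⟩ x
  -- the ψ map recovering N_G from N_{G'}
  set ψ : Set ↥(({v} : Set V)ᶜ) → Set V := fun S' =>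
    {z | (∃ h : z ∈ ({v} : Set V)ᶜ, (⟨z, h⟩ : ↥(({v} : Set V)ᶜ)) ∈ S') ∨
      (z = v ∧ (⟨u, hu'⟩ : ↥(({v} : Set V)ᶜ)) ∈ S')} with hψdef
  have hψ : ∀ w : ↥(({v} : Set V)ᶜ), cN G (w : V) ∈ B → ψ (cN G' w) = cN G (w : V) := by
    intro w hw
    ext z
    simp only [hψdef, Set.mem_setOf_eq]
    constructor
    · rintro (⟨hz, hz2⟩ | ⟨rfl, hz2⟩)
      · exact (hmem w ⟨z, hz⟩).1 hz2
      · exact (hvuB _ hw).2 ((hmem w ⟨u, hu'⟩).1 hz2)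
    · intro hz
      by_cases hzv : z = v
      · refine Or.inr ⟨hzv, (hmem w ⟨u, hu'⟩).2 ((hvuB _ hw).1 (hzv ▸ hz))⟩
      · exact Or.inl ⟨by simp [hzv], (hmem w ⟨z, by simp [hzv]⟩).2 hz⟩
  constructor
  · -- forward
    rintro ⟨T, hT, hTk⟩
    refine ⟨fun S' => {x : ↥(({v} : Set V)ᶜ) | ((x : V) ∈ T (ψ S') ∧ (x : V) ≠ v) ∨
      ((x : V) = u ∧ v ∈ T (ψ S'))}, ?_, ?_⟩
    · intro a b ha hb hab
      obtain ⟨w₁, hw₁B, hw₁⟩ := ha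
      obtain ⟨w₂, hw₂B, hw₂⟩ := hb
      rw [← hG'] at hw₁ hw₂
      have hne : cN G (w₁ : V) ≠ cN G (w₂ : V) := by
        intro h
        apply hab
        rw [hw₁, hw₂, hphi, hphi, h]
      obtain ⟨z, hz, hzd⟩ := hT (w₁ : V) (w₂ : V) hw₁B hw₂B hne
      have hψ1 : ψ (cN G' a) = cN G (w₁ : V) := by rw [hw₁]; exact hψ w₁ hw₁B
      have hψ2 : ψ (cN G' b) = cN G (w₂ : V) := by rw [hw₂]; exact hψ w₂ hw₂B
      by_cases hzv : z = v
      · rw [hzv] at hz hzd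
        refine ⟨⟨u, hu'⟩, ?_, ?_⟩
        · rcases hz with hz | hz
          · exact Or.inl (Or.inr ⟨rfl, by rwa [hψ1]⟩)
          · exact Or.inr (Or.inr ⟨rfl, by rwa [hψ2]⟩)
        · have d1 : (⟨u, hu'⟩ : ↥(({v} : Set V)ᶜ)) ∈ cN G' a ↔ v ∈ cN G (w₁ : V) := by
            rw [hw₁, hmem, hvuB _ hw₁B]
          have d2 : (⟨u, hu'⟩ : ↥(({v} : Set V)ᶜ)) ∈ cN G' b ↔ v ∈ cN G (w₂ : V) := by
            rw [hw₂, hmem, hvuB _ hw₂B]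
          unfold Distinguishes Xor' at hzd ⊢
          rw [d1, d2]; exact hzd
      · refine ⟨⟨z, by simp [hzv]⟩, ?_, ?_⟩
        · rcases hz with hz | hz
          · exact Or.inl (Or.inl ⟨by rwa [hψ1], hzv⟩)
          · exact Or.inr (Or.inl ⟨by rwa [hψ2], hzv⟩)
        · have d1 : (⟨z, by simp [hzv]⟩ : ↥(({v} : Set V)ᶜ)) ∈ cN G' a ↔ z ∈ cN G (w₁ : V) := by
            rw [hw₁, hmem]
          have d2 : (⟨z, by simp [hzv]⟩ : ↥(({v} : Set V)ᶜ)) ∈ cN G' b ↔ z ∈ cN G (w₂ : V) := by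
            rw [hw₂, hmem]
          unfold Distinguishes Xor' at hzd ⊢
          rw [d1, d2]; exact hzd
    · intro S' hS'
      obtain ⟨w, hwB', rfl⟩ := hS'
      show ({x : ↥(({v} : Set V)ᶜ) | ((x : V) ∈ T (ψ (cN G' w)) ∧ (x : V) ≠ v) ∨
        ((x : V) = u ∧ v ∈ T (ψ (cN G' w)))}).ncard ≤ k
      rw [hψ w hwB']
      set A : Set V := T (cN G (w : V)) with hAdef
      have hAk : A.ncard ≤ k := hTk _ hwB'
      set A' : Set V := (A \ {v}) ∪ {x | x = u ∧ v ∈ A} with hA'def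
      have hsub : Subtype.val '' {x : ↥(({v} : Set V)ᶜ) | ((x : V) ∈ A ∧ (x : V) ≠ v) ∨
          ((x : V) = u ∧ v ∈ A)} ⊆ A' := by
        rintro z ⟨x, hx, rfl⟩
        rcases hx with ⟨h1, h2⟩ | ⟨h1, h2⟩
        · exact Or.inl ⟨h1, h2⟩
        · exact Or.inr ⟨h1, h2⟩
      have hA'k : A'.ncard ≤ k := by
        by_cases hvA : v ∈ A
        · have hins : A' = insert u (A \ {v}) := by
            rw [hA'def]; ext z
            simp only [Set.mem_union, Set.mem_setOf_eq, Set.mem_insert_iff]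
            constructor
            · rintro (h | ⟨rfl, _⟩)
              · exact Or.inr h
              · exact Or.inl rfl
            · rintro (rfl | h)
              · exact Or.inr ⟨rfl, hvA⟩
              · exact Or.inl h
          rw [hins]
          calc (insert u (A \ {v})).ncard ≤ (A \ {v}).ncard + 1 :=
                Set.ncard_insert_le _ _
            _ = A.ncard - 1 + 1 := by rw [Set.ncard_diff_singleton_of_mem hvA]
            _ ≤ A.ncard := by
                have h1 : 1 ≤ A.ncard := (Set.ncard_pos A.toFinite).2 ⟨v, hvA⟩
                omega
            _ ≤ k := hAk
        · have hAe : A' = A \ {v} := by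
            rw [hA'def]; ext z
            simp only [Set.mem_union, Set.mem_setOf_eq]
            constructor
            · rintro (h | ⟨_, h⟩)
              · exact h
              · exact absurd h hvA
            · exact Or.inl
          rw [hAe]
          exact le_trans (Set.ncard_le_ncard Set.diff_subset A.toFinite) hAk
      calc ({x : ↥(({v} : Set V)ᶜ) | ((x : V) ∈ A ∧ (x : V) ≠ v) ∨ ((x : V) = u ∧ v ∈ A)}).ncard
          = (Subtype.val '' {x : ↥(({v} : Set V)ᶜ) | ((x : V) ∈ A ∧ (x : V) ≠ v) ∨
              ((x : V) = u ∧ v ∈ A)}).ncard :=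
            (Set.ncard_image_of_injective _ Subtype.val_injective).symm
        _ ≤ A'.ncard := Set.ncard_le_ncard hsub A'.toFinite
        _ ≤ k := hA'k
  · -- backward
    rintro ⟨T', hT', hTk'⟩
    refine ⟨fun S => Subtype.val '' T' {x : ↥(({v} : Set V)ᶜ) | (x : V) ∈ S}, ?_, ?_⟩
    · intro a b ha hb hab
      have hav := hwB a ha
      have hbv := hwB b hb
      have ha2 : a ∈ ({v} : Set V)ᶜ := by simp [hav.2]
      have hb2 : b ∈ ({v} : Set V)ᶜ := by simp [hbv.2]
      have hpa : {x : ↥(({v} : Set V)ᶜ) | (x : V) ∈ cN G a} = cN G' ⟨a, ha2⟩ := (hphi' a ha2).symm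
      have hpb : {x : ↥(({v} : Set V)ᶜ) | (x : V) ∈ cN G b} = cN G' ⟨b, hb2⟩ := (hphi' b hb2).symm
      have hne' : cN G' ⟨a, ha2⟩ ≠ cN G' ⟨b, hb2⟩ := by
        intro h
        apply hab
        ext z
        by_cases hzv : z = v
        · rw [hzv, hvu a hav.1 hav.2, hvu b hbv.1 hbv.2,
            ← hmem ⟨a, ha2⟩ ⟨u, hu'⟩, ← hmem ⟨b, hb2⟩ ⟨u, hu'⟩, h]
        · rw [← hmem ⟨a, ha2⟩ ⟨z, by simp [hzv]⟩, ← hmem ⟨b, hb2⟩ ⟨z, by simp [hzv]⟩, h]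
      obtain ⟨x, hx, hxd⟩ := hT' ⟨a, ha2⟩ ⟨b, hb2⟩ ⟨⟨a, ha2⟩, ha, hG' ▸ rfl⟩
        ⟨⟨b, hb2⟩, hb, hG' ▸ rfl⟩ hne'
      refine ⟨(x : V), ?_, ?_⟩
      · rcases hx with hx | hx
        · exact Or.inl ⟨x, by rwa [hpa], rfl⟩
        · exact Or.inr ⟨x, by rwa [hpb], rfl⟩
      · unfold Distinguishes Xor' at hxd ⊢
        rw [← hmem ⟨a, ha2⟩ x, ← hmem ⟨b, hb2⟩ x]
        exact hxd
    · intro S hS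
      obtain ⟨w, rfl⟩ := hB hS
      have hwv := hwB w hS
      have hw2 : w ∈ ({v} : Set V)ᶜ := by simp [hwv.2]
      show (Subtype.val '' T' {x : ↥(({v} : Set V)ᶜ) | (x : V) ∈ cN G w}).ncard ≤ k
      rw [← hphi' w hw2, Set.ncard_image_of_injective _ Subtype.val_injective]
      exact hTk' _ ⟨⟨w, hw2⟩, hS, hG' ▸ rfl⟩
end

section
/- Let G be a finite simple graph containing no subgraph isomorphic to the complete bipartite graph K_{3,3} (in particular, any planar graph). If B = {N[v] : v ∈ V(G)}, then NCTD⁺(B) ≤ 7. -/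
/-- `G` contains a subgraph isomorphic to `K_{3,3}`: six distinct vertices
`a 0, a 1, a 2, b 0, b 1, b 2` with every `a i` adjacent to every `b j`. -/
def HasK33 {V : Type*} (G : SimpleGraph V) : Prop :=
  ∃ a b : Fin 3 → V,
    Function.Injective (Sum.elim a b) ∧ ∀ i j : Fin 3, G.Adj (a i) (b j)

lemma mem_cN {V : Type*} {G : SimpleGraph V} {w v : V} : w ∈ cN G v ↔ w = v ∨ G.Adj v w := by
  simp [cN]

lemma self_mem_cN {V : Type*} (G : SimpleGraph V) (v : V) : v ∈ cN G v :=
  mem_cN.mpr (Or.inl rfl)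

lemma cN_comm {V : Type*} {G : SimpleGraph V} {u v : V} (h : u ∈ cN G v) : v ∈ cN G u := by
  rcases mem_cN.mp h with h | h
  · exact mem_cN.mpr (Or.inl h.symm)
  · exact mem_cN.mpr (Or.inr h.symm)

lemma adj_of_mem_cN {V : Type*} {G : SimpleGraph V} {u v : V} (h : u ∈ cN G v) (hne : u ≠ v) :
    G.Adj v u := by
  rcases mem_cN.mp h with h | h
  · exact absurd h hne
  · exact h


set_option maxHeartbeats 1000000 in
lemma mkK33 {V : Type*} (G : SimpleGraph V) {v w1 w2 x1 x2 x3 : V}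
    (hvw1 : v ≠ w1) (hvw2 : v ≠ w2) (hw12 : w1 ≠ w2)
    (h12 : x1 ≠ x2) (h13 : x1 ≠ x3) (h23 : x2 ≠ x3)
    (hx1v : x1 ≠ v) (hx1w1 : x1 ≠ w1) (hx1w2 : x1 ≠ w2)
    (hx2v : x2 ≠ v) (hx2w1 : x2 ≠ w1) (hx2w2 : x2 ≠ w2)
    (hx3v : x3 ≠ v) (hx3w1 : x3 ≠ w1) (hx3w2 : x3 ≠ w2)
    (a11 : G.Adj v x1) (a12 : G.Adj v x2) (a13 : G.Adj v x3)
    (a21 : G.Adj w1 x1) (a22 : G.Adj w1 x2) (a23 : G.Adj w1 x3)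
    (a31 : G.Adj w2 x1) (a32 : G.Adj w2 x2) (a33 : G.Adj w2 x3) :
    HasK33 G := by
  refine ⟨![v, w1, w2], ![x1, x2, x3], ?_, ?_⟩
  · intro p q h
    rcases p with p | p <;> rcases q with q | q <;>
      fin_cases p <;> fin_cases q <;> simp_all
  · intro i j
    fin_cases i <;> fin_cases j <;> simpa

lemma hitting {V : Type*} [Fintype V] (G : SimpleGraph V) (hK33 : ¬ HasK33 G) (v : V) :
    ∃ S : Set V, S ⊆ cN G v ∧ S.ncard ≤ 6 ∧
      ∀ u, u ∈ cN G v → (cN G v \ cN G u).Nonempty → (S ∩ (cN G v \ cN G u)).Nonempty := by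
  classical
  set U : Set V := {u | u ∈ cN G v ∧ (cN G v \ cN G u).Nonempty} with hUdef
  by_cases hUne : U.Nonempty
  · obtain ⟨u1, hu1⟩ := hUne
    obtain ⟨w1, hw1⟩ := hu1.2
    set U1 : Set V := {u ∈ U | w1 ∈ cN G u} with hU1def
    by_cases hU1ne : U1.Nonempty
    · obtain ⟨u2, hu2⟩ := hU1ne
      obtain ⟨w2, hw2⟩ := hu2.1.2
      set U2 : Set V := {u ∈ U1 | w2 ∈ cN G u} with hU2def
      have hg : ∀ u ∈ U2, (cN G v \ cN G u).Nonempty := fun u hu => hu.1.1.2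
      set g : V → V := fun u => if h : u ∈ U2 then (hg u h).choose else v with hgdef
      have hgspec : ∀ u ∈ U2, g u ∈ cN G v \ cN G u := by
        intro u hu
        simp only [hgdef, dif_pos hu]
        exact (hg u hu).choose_spec
      -- distinctness of v, w1, w2
      have hvne_w1 : w1 ≠ v := by
        intro h; exact hw1.2 (h ▸ cN_comm hu1.1)
      have hvne_w2 : w2 ≠ v := by
        intro h; exact hw2.2 (h ▸ cN_comm hu2.1.1)
      have hw12 : w1 ≠ w2 := by
        intro h; exact hw2.2 (h ▸ hu2.2)
      -- key: at most 2 elements of U2 outside {w1, w2}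
      have hsmall : (U2 \ {w1, w2}).ncard ≤ 2 := by
        by_contra hbig
        push_neg at hbig
        have hfin : (U2 \ {w1, w2}).Finite := Set.toFinite _
        rw [Set.ncard_eq_toFinset_card _ hfin] at hbig
        obtain ⟨x1, x2, x3, hx1, hx2, hx3, h12, h13, h23⟩ :=
          Finset.two_lt_card_iff.mp hbig
        simp only [Set.Finite.mem_toFinset] at hx1 hx2 hx3
        apply hK33
        have hx : ∀ x, x ∈ U2 \ ({w1, w2} : Set V) →
            x ≠ v ∧ x ≠ w1 ∧ x ≠ w2 ∧ G.Adj v x ∧ G.Adj w1 x ∧ G.Adj w2 x := by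
          intro x hxm
          have hxv : x ≠ v := by
            intro h
            obtain ⟨z, hz⟩ := hxm.1.1.1.2
            exact hz.2 (h ▸ hz.1)
          have hxw1 : x ≠ w1 := fun h => hxm.2 (by simp [h])
          have hxw2 : x ≠ w2 := fun h => hxm.2 (by simp [h])
          exact ⟨hxv, hxw1, hxw2, adj_of_mem_cN hxm.1.1.1.1 hxv,
            (adj_of_mem_cN hxm.1.1.2 (Ne.symm hxw1)).symm,
            (adj_of_mem_cN hxm.1.2 (Ne.symm hxw2)).symm⟩
        obtain ⟨e1, e2, e3, e4, e5, e6⟩ := hx x1 hx1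
        obtain ⟨f1, f2, f3, f4, f5, f6⟩ := hx x2 hx2
        obtain ⟨k1, k2, k3, k4, k5, k6⟩ := hx x3 hx3
        exact mkK33 G (Ne.symm hvne_w1) (Ne.symm hvne_w2) hw12 h12 h13 h23
          e1 e2 e3 f1 f2 f3 k1 k2 k3 e4 f4 k4 e5 f5 k5 e6 f6 k6
      have hU2card : U2.ncard ≤ 4 := by
        have hsub : U2 ⊆ (U2 \ {w1, w2}) ∪ {w1, w2} := by
          intro x hx
          by_cases h : x ∈ ({w1, w2} : Set V)
          · exact Or.inr h
          · exact Or.inl ⟨hx, h⟩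
        calc U2.ncard ≤ ((U2 \ {w1, w2}) ∪ {w1, w2}).ncard :=
              Set.ncard_le_ncard hsub (Set.toFinite _)
          _ ≤ (U2 \ {w1, w2}).ncard + ({w1, w2} : Set V).ncard :=
              Set.ncard_union_le _ _
          _ ≤ 2 + 2 := by
              refine Nat.add_le_add hsmall ?_
              calc ({w1, w2} : Set V).ncard ≤ ({w2} : Set V).ncard + 1 :=
                    Set.ncard_insert_le _ _
                _ ≤ 2 := by simp
          _ = 4 := rfl
      refine ⟨{w1, w2} ∪ g '' U2, ?_, ?_, ?_⟩
      · intro x hx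
        rcases hx with hx | ⟨u, hu, rfl⟩
        · rcases hx with rfl | hx
          · exact hw1.1
          · simp only [Set.mem_singleton_iff] at hx; exact hx ▸ hw2.1
        · exact (hgspec u hu).1
      · calc ({w1, w2} ∪ g '' U2).ncard
            ≤ ({w1, w2} : Set V).ncard + (g '' U2).ncard := Set.ncard_union_le _ _
          _ ≤ 2 + 4 := by
              refine Nat.add_le_add ?_ ?_
              · calc ({w1, w2} : Set V).ncard ≤ ({w2} : Set V).ncard + 1 :=
                    Set.ncard_insert_le _ _
                  _ ≤ 2 := by simp
              · exact le_trans (Set.ncard_image_le (Set.toFinite _)) hU2card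
          _ = 6 := rfl
      · intro u hu hne
        have huU : u ∈ U := ⟨hu, hne⟩
        by_cases h1 : w1 ∈ cN G u
        · by_cases h2 : w2 ∈ cN G u
          · have huU2 : u ∈ U2 := ⟨⟨huU, h1⟩, h2⟩
            exact ⟨g u, Or.inr ⟨u, huU2, rfl⟩, hgspec u huU2⟩
          · exact ⟨w2, Or.inl (Or.inr rfl), hw2.1, h2⟩
        · exact ⟨w1, Or.inl (Or.inl rfl), hw1.1, h1⟩
    · refine ⟨{w1}, ?_, ?_, ?_⟩
      · intro x hx; simp only [Set.mem_singleton_iff] at hx; exact hx ▸ hw1.1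
      · simp
      · intro u hu hne
        have huU : u ∈ U := ⟨hu, hne⟩
        have : w1 ∉ cN G u := fun h => hU1ne ⟨u, huU, h⟩
        exact ⟨w1, rfl, hw1.1, this⟩
  · refine ⟨∅, by simp, by simp, ?_⟩
    intro u hu hne
    exact absurd ⟨u, hu, hne⟩ hUne

/-- If `G` has no subgraph isomorphic to `K_{3,3}` (in particular, if `G` is planar) and
`B = {N[v] : v ∈ V(G)}`, then `NCTD⁺(B) ≤ 7`: there is a positive non-clashing teaching
map of size at most `7` for `B`. -/
theorem stmt12 {V : Type*} [Fintype V] (G : SimpleGraph V)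
    (hK33 : ¬ HasK33 G) :
    ∃ T : Set V → Set V,
      (∀ S ∈ {S : Set V | ∃ v : V, S = cN G v}, T S ⊆ S) ∧
      IsNCTM G {S : Set V | ∃ v : V, S = cN G v} T ∧
      ∀ S ∈ {S : Set V | ∃ v : V, S = cN G v}, (T S).ncard ≤ 7 := by
  classical
  choose Sv hsub hcard hhit using hitting G hK33
  refine ⟨fun S => if h : ∃ x : V, S = cN G x then insert h.choose (Sv h.choose) else ∅,
    ?_, ?_, ?_⟩
  · intro S hS
    simp only [Set.mem_setOf_eq] at hS
    simp only [dif_pos hS]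
    have h1 : insert hS.choose (Sv hS.choose) ⊆ cN G hS.choose :=
      Set.insert_subset (self_mem_cN G _) (hsub _)
    intro x hx
    rw [hS.choose_spec]
    exact h1 hx
  · intro u v hu hv hne
    simp only [Set.mem_setOf_eq] at hu hv
    have hu' : ∃ x : V, cN G u = cN G x := hu
    have hv' : ∃ x : V, cN G v = cN G x := hv
    simp only [dif_pos hu', dif_pos hv']
    set r := hu'.choose with hrdef
    set s := hv'.choose with hsdef
    have hr : cN G u = cN G r := hu'.choose_spec
    have hs : cN G v = cN G s := hv'.choose_spec
    by_cases hrv : r ∈ cN G v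
    · by_cases hsu : s ∈ cN G u
      · -- both cross-memberships hold
        have hrs : cN G r ≠ cN G s := by rw [← hr, ← hs]; exact hne
        have hsr : s ∈ cN G r := hr ▸ hsu
        have hrs' : r ∈ cN G s := hs ▸ hrv
        by_cases hd : (cN G r \ cN G s).Nonempty
        · obtain ⟨w, hwS, hwd⟩ := hhit r s hsr hd
          refine ⟨w, Or.inl (Set.mem_insert_of_mem _ hwS), Or.inl ⟨?_, ?_⟩⟩
          · rw [hr]; exact hwd.1
          · rw [hs]; exact hwd.2
        · have hd2 : (cN G s \ cN G r).Nonempty := by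
            rw [Set.nonempty_iff_ne_empty]
            intro h
            rw [Set.not_nonempty_iff_eq_empty] at hd
            rw [Set.diff_eq_empty] at h hd
            exact hrs (le_antisymm hd h)
          obtain ⟨w, hwS, hwd⟩ := hhit s r hrs' hd2
          refine ⟨w, Or.inr (Set.mem_insert_of_mem _ hwS), Or.inr ⟨?_, ?_⟩⟩
          · rw [hs]; exact hwd.1
          · rw [hr]; exact hwd.2
      · refine ⟨s, Or.inr (Set.mem_insert _ _), Or.inr ⟨?_, hsu⟩⟩
        rw [hs]; exact self_mem_cN G s
    · refine ⟨r, Or.inl (Set.mem_insert _ _), Or.inl ⟨?_, hrv⟩⟩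
      rw [hr]; exact self_mem_cN G r
  · intro S hS
    simp only [Set.mem_setOf_eq] at hS
    simp only [dif_pos hS]
    calc (insert hS.choose (Sv hS.choose)).ncard ≤ (Sv hS.choose).ncard + 1 :=
        Set.ncard_insert_le _ _
      _ ≤ 7 := by have := hcard hS.choose; omega
end

section
/- Let G be a finite unit square graph, i.e. there is a map P : V(G) → ℝ² such that distinct vertices u, v are adjacent if and only if ‖P(u) − P(v)‖_∞ ≤ 1 (G is the intersection graph of the axis-parallel unit squares centered at the points P(v)). If B = {N[v] : v ∈ V(G)}, then NCTD⁺(B) ≤ 4 (and hence also NCTD(B) ≤ 4). -/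
open Classical in
noncomputable def maxBy {V : Type*} [Nonempty V] [Fintype V] (f : V → ℝ) (S : Set V) : V :=
  if h : S.Nonempty then (Set.exists_max_image S f S.toFinite h).choose
  else Classical.arbitrary V

lemma maxBy_mem {V : Type*} [Nonempty V] [Fintype V] (f : V → ℝ) {S : Set V}
    (h : S.Nonempty) : maxBy f S ∈ S := by
  rw [maxBy]
  rw [dif_pos h]
  exact (Set.exists_max_image S f S.toFinite h).choose_spec.1

lemma maxBy_le {V : Type*} [Nonempty V] [Fintype V] (f : V → ℝ) {S : Set V}
    (h : S.Nonempty) {w : V} (hw : w ∈ S) : f w ≤ f (maxBy f S) := by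
  rw [maxBy]
  rw [dif_pos h]
  exact (Set.exists_max_image S f S.toFinite h).choose_spec.2 w hw

lemma not_mem_cN_of_far {V : Type*} (G : SimpleGraph V) (P : V → ℝ × ℝ)
    (hadj : ∀ u v : V, u ≠ v →
      (G.Adj u v ↔ max |(P u).1 - (P v).1| |(P u).2 - (P v).2| ≤ 1))
    {v m : V} (h : 1 < |(P v).1 - (P m).1| ∨ 1 < |(P v).2 - (P m).2|) :
    m ∉ cN G v := by
  intro hm
  rcases Set.mem_insert_iff.mp hm with rfl | hAdj
  · simp only [sub_self, abs_zero] at h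
    rcases h with h | h <;> linarith
  · have hne : v ≠ m := (G.ne_of_adj hAdj)
    have := (hadj v m hne).mp hAdj
    rw [max_le_iff] at this
    rcases h with h | h <;> linarith [this.1, this.2]

lemma key {V : Type*} [Nonempty V] [Fintype V] (G : SimpleGraph V) (P : V → ℝ × ℝ)
    (hadj : ∀ u v : V, u ≠ v →
      (G.Adj u v ↔ max |(P u).1 - (P v).1| |(P u).2 - (P v).2| ≤ 1))
    {u v w : V} (hwu : w ∈ cN G u) (hwv : w ∉ cN G v) :
    ∃ m ∈ ({maxBy (fun z => (P z).1) (cN G u), maxBy (fun z => -(P z).1) (cN G u),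
      maxBy (fun z => (P z).2) (cN G u), maxBy (fun z => -(P z).2) (cN G u)} : Set V),
      m ∈ cN G u ∧ m ∉ cN G v := by
  have hSne : (cN G u).Nonempty := ⟨u, Set.mem_insert _ _⟩
  have hwvne : w ≠ v := by rintro rfl; exact hwv (Set.mem_insert _ _)
  have hnAdj : ¬ G.Adj v w := fun hA => hwv (Set.mem_insert_of_mem _ hA)
  have hfar : 1 < max |(P v).1 - (P w).1| |(P v).2 - (P w).2| := by
    by_contra hc
    push_neg at hc
    exact hnAdj ((hadj v w hwvne.symm).mpr hc)
  rw [lt_max_iff] at hfar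
  rcases hfar with hx | hy
  · rw [lt_abs] at hx
    rcases hx with hx | hx
    · -- (P v).1 - (P w).1 > 1 : take min x
      refine ⟨maxBy (fun z => -(P z).1) (cN G u), by simp, maxBy_mem _ hSne,
        not_mem_cN_of_far G P hadj (Or.inl ?_)⟩
      have := maxBy_le (fun z => -(P z).1) hSne hwu
      rw [lt_abs]; left; linarith
    · -- (P w).1 - (P v).1 > 1 : take max x
      refine ⟨maxBy (fun z => (P z).1) (cN G u), by simp, maxBy_mem _ hSne,
        not_mem_cN_of_far G P hadj (Or.inl ?_)⟩
      have := maxBy_le (fun z => (P z).1) hSne hwu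
      rw [lt_abs]; right; linarith
  · rw [lt_abs] at hy
    rcases hy with hy | hy
    · refine ⟨maxBy (fun z => -(P z).2) (cN G u), by simp, maxBy_mem _ hSne,
        not_mem_cN_of_far G P hadj (Or.inr ?_)⟩
      have := maxBy_le (fun z => -(P z).2) hSne hwu
      rw [lt_abs]; left; linarith
    · refine ⟨maxBy (fun z => (P z).2) (cN G u), by simp, maxBy_mem _ hSne,
        not_mem_cN_of_far G P hadj (Or.inr ?_)⟩
      have := maxBy_le (fun z => (P z).2) hSne hwu
      rw [lt_abs]; right; linarith

/-- If `G` is a unit square graph, i.e. there is a map `P : V(G) → ℝ²` such that distinct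
vertices `u, v` are adjacent iff `‖P u − P v‖_∞ ≤ 1`, and `B = {N[v] : v ∈ V(G)}`, then
`NCTD⁺(B) ≤ 4`, and hence also `NCTD(B) ≤ 4`: there is a positive non-clashing teaching
map of size at most `4` for `B`, and hence also a (not necessarily positive) one. -/
theorem stmt14 {V : Type*} [Fintype V] (G : SimpleGraph V) (P : V → ℝ × ℝ)
    (hadj : ∀ u v : V, u ≠ v →
      (G.Adj u v ↔ max |(P u).1 - (P v).1| |(P u).2 - (P v).2| ≤ 1)) :
    (∃ T : Set V → Set V,
      (∀ S ∈ {S : Set V | ∃ v : V, S = cN G v}, T S ⊆ S) ∧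
      IsNCTM G {S : Set V | ∃ v : V, S = cN G v} T ∧
      ∀ S ∈ {S : Set V | ∃ v : V, S = cN G v}, (T S).ncard ≤ 4) ∧
    (∃ T : Set V → Set V,
      IsNCTM G {S : Set V | ∃ v : V, S = cN G v} T ∧
      ∀ S ∈ {S : Set V | ∃ v : V, S = cN G v}, (T S).ncard ≤ 4) := by
  rcases isEmpty_or_nonempty V with hV | hV
  · refine ⟨⟨fun _ => ∅, ?_, ?_, ?_⟩, ⟨fun _ => ∅, ?_, ?_⟩⟩
    · rintro S ⟨v, rfl⟩; exact (hV.false v).elim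
    · intro u; exact (hV.false u).elim
    · rintro S ⟨v, rfl⟩; exact (hV.false v).elim
    · intro u; exact (hV.false u).elim
    · rintro S ⟨v, rfl⟩; exact (hV.false v).elim
  · set T : Set V → Set V := fun S =>
      {maxBy (fun z => (P z).1) S, maxBy (fun z => -(P z).1) S,
       maxBy (fun z => (P z).2) S, maxBy (fun z => -(P z).2) S} with hT
    have hpos : ∀ S ∈ {S : Set V | ∃ v : V, S = cN G v}, T S ⊆ S := by
      rintro S ⟨v, rfl⟩ m hm
      have hne : (cN G v).Nonempty := ⟨v, Set.mem_insert _ _⟩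
      simp only [hT, Set.mem_insert_iff, Set.mem_singleton_iff] at hm
      rcases hm with rfl | rfl | rfl | rfl <;> exact maxBy_mem _ hne
    have hnctm : IsNCTM G {S : Set V | ∃ v : V, S = cN G v} T := by
      intro u v _ _ hne
      have : ¬ (cN G u ⊆ cN G v) ∨ ¬ (cN G v ⊆ cN G u) := by
        by_contra hc
        push_neg at hc
        exact hne (hc.1.antisymm hc.2)
      rcases this with hs | hs
      · obtain ⟨w, hw1, hw2⟩ := Set.not_subset.mp hs
        obtain ⟨m, hmT, hmu, hmv⟩ := key G P hadj hw1 hw2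
        exact ⟨m, Or.inl hmT, Or.inl ⟨hmu, hmv⟩⟩
      · obtain ⟨w, hw1, hw2⟩ := Set.not_subset.mp hs
        obtain ⟨m, hmT, hmv, hmu⟩ := key G P hadj hw1 hw2
        exact ⟨m, Or.inr hmT, Or.inr ⟨hmv, hmu⟩⟩
    have hcard : ∀ S ∈ {S : Set V | ∃ v : V, S = cN G v}, (T S).ncard ≤ 4 := by
      intro S _
      have h1 := Set.ncard_insert_le (maxBy (fun z => (P z).1) S)
        ({maxBy (fun z => -(P z).1) S, maxBy (fun z => (P z).2) S,
          maxBy (fun z => -(P z).2) S} : Set V)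
      have h2 := Set.ncard_insert_le (maxBy (fun z => -(P z).1) S)
        ({maxBy (fun z => (P z).2) S, maxBy (fun z => -(P z).2) S} : Set V)
      have h3 := Set.ncard_insert_le (maxBy (fun z => (P z).2) S)
        ({maxBy (fun z => -(P z).2) S} : Set V)
      have h4 : ({maxBy (fun z => -(P z).2) S} : Set V).ncard = 1 := Set.ncard_singleton _
      simp only [hT]
      omega
    exact ⟨⟨T, hpos, hnctm, hcard⟩, ⟨T, hnctm, hcard⟩⟩
end
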